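/- arXiv:2006.12207 — 3 statements merged into one kernel-verified Lean document; each statement's English description precedes it below -/
import Mathlib

section
/- Let A be a finite alphabet and let φ: A* → A* be a morphism in Class P_ret with marker w. Then for every finite word v ∈ A*, the word w is a prefix of φ(v)w, and the number of occurrences of w as a factor of φ(v)w is exactly |v| + 1. -/
open List

/-- Apply a morphism (given by its values on letters) to a finite word. -/
def applyM {A : Type*} (φ : A → List A) (v : List A) : List A := v.flatMap φ

/-- The set of occurrences of `w` as a factor of `u`:
indices `i` such that the block of `u` of length `|w|` starting at `i` equals `w`. -/
def occs {A : Type*} [DecidableEq A] (w u : List A) : Finset ℕ :=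
  (Finset.range (u.length + 1)).filter
    (fun i => i + w.length ≤ u.length ∧ (u.drop i).take w.length = w)

/-- A morphism `φ` belongs to Class `P_ret` with marker `w` if it is injective on
letters, `w` is a palindrome, and for each letter `a` the word `φ(a)w` is a palindrome
in which `w` occurs exactly twice, namely as a prefix (position `0`) and as a suffix
(position `|φ(a)|`, distinct from `0`). -/
def IsPretWithMarker {A : Type*} [DecidableEq A] (φ : A → List A) (w : List A) : Prop :=
  Function.Injective φ ∧ w.reverse = w ∧
    ∀ a : A, (φ a ++ w).reverse = φ a ++ w ∧
      occs w (φ a ++ w) = {0, (φ a).length} ∧ (φ a).length ≠ 0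

/-- The block of length `len` of the infinite word `u` starting at position `i`. -/
def factorAt {A : Type*} (u : ℕ → A) (i len : ℕ) : List A :=
  (List.range len).map fun k => u (i + k)

/-- `i` is an occurrence of the finite word `v` in the infinite word `u`. -/
def OccursAt {A : Type*} (u : ℕ → A) (v : List A) (i : ℕ) : Prop :=
  factorAt u i v.length = v

/-- `v` belongs to the language of the infinite word `u`, i.e. `v` is a factor of `u`. -/
def InLang {A : Type*} (u : ℕ → A) (v : List A) : Prop := ∃ i, OccursAt u v i

/-- The image `φ(u) = φ(u₀)φ(u₁)φ(u₂)⋯` of an infinite word `u` under a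
(non-erasing) morphism `φ`, as an infinite word. -/
def applyInf {A : Type*} (φ : A → List A) (u : ℕ → A) (n : ℕ) : A :=
  (((List.range (n + 1)).flatMap fun i => φ (u i))).getD n (u 0)

/-- The language of `u` is closed under reversal. -/
def ClosedUnderReversal {A : Type*} (u : ℕ → A) : Prop :=
  ∀ v : List A, InLang u v → InLang u v.reverse

/-- A finite word is rich if its number of palindromic factors (including `ε`)
equals its length plus one. -/
def RichWord {A : Type*} (u : List A) : Prop :=
  {p : List A | p <:+: u ∧ p.reverse = p}.ncard = u.length + 1

/-- An infinite word is rich if all its finite prefixes are rich. -/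
def RichInf {A : Type*} (u : ℕ → A) : Prop := ∀ n : ℕ, RichWord (factorAt u 0 n)

/-- An infinite word is recurrent if each of its factors occurs infinitely often. -/
def Recurrent {A : Type*} (u : ℕ → A) : Prop :=
  ∀ v : List A, InLang u v → ∀ N : ℕ, ∃ i, N ≤ i ∧ OccursAt u v i

/-- `r` is a return word to `w` in the infinite word `u`: `wr ∈ L(u)` and `w`
occurs in `wr` exactly twice, as a prefix and as a suffix. -/
def IsReturnWord {A : Type*} [DecidableEq A] (u : ℕ → A) (w r : List A) : Prop :=
  r ≠ [] ∧ InLang u (w ++ r) ∧ occs w (w ++ r) = {0, r.length}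

/-- Left extensions of `x` in the language of `u`. -/
def leftExt {A : Type*} (u : ℕ → A) (x : List A) : Set A := {a | InLang u (a :: x)}

/-- Right extensions of `x` in the language of `u`. -/
def rightExt {A : Type*} (u : ℕ → A) (x : List A) : Set A := {b | InLang u (x ++ [b])}

/-- Bi-extensions of `x` in the language of `u`. -/
def biExt {A : Type*} (u : ℕ → A) (x : List A) : Set (A × A) :=
  {p | InLang u (p.1 :: (x ++ [p.2]))}

/-- `x` is bispecial in `u`. -/
def Bispecial {A : Type*} (u : ℕ → A) (x : List A) : Prop :=
  2 ≤ (leftExt u x).ncard ∧ 2 ≤ (rightExt u x).ncard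

/-- The bilateral order `b_u(x) = #B_u(x) − #L_u(x) − #R_u(x) + 1`. -/
noncomputable def bilateralOrder {A : Type*} (u : ℕ → A) (x : List A) : ℤ :=
  ((biExt u x).ncard : ℤ) - (leftExt u x).ncard - (rightExt u x).ncard + 1

/-- The number of palindromic extensions of `x` in `u`. -/
noncomputable def pext {A : Type*} (u : ℕ → A) (x : List A) : ℕ :=
  {a | InLang u (a :: (x ++ [a]))}.ncard

/-- Arnoux-Rauzy morphisms: the monoid of morphisms generated by permutations of the
alphabet and by the elementary morphisms `ψ_a : a ↦ a, b ↦ ab` and `ψ̄_a : a ↦ a, b ↦ ba`. -/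
inductive IsAR {A : Type*} [DecidableEq A] : (A → List A) → Prop
  | perm (π : Equiv.Perm A) : IsAR (fun a => [π a])
  | psiL (a : A) : IsAR (fun b => if b = a then [a] else [a, b])
  | psiR (a : A) : IsAR (fun b => if b = a then [a] else [b, a])
  | comp {φ ψ : A → List A} : IsAR φ → IsAR ψ → IsAR (fun a => applyM φ (ψ a))

/-- The `k`-th power `φ^k` of a morphism. -/
def powM {A : Type*} (φ : A → List A) : ℕ → A → List A
  | 0, a => [a]
  | n + 1, a => applyM (powM φ n) (φ a)

/-- A morphism is primitive if some power of it maps every letter to a word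
containing every letter. -/
def PrimitiveM {A : Type*} (φ : A → List A) : Prop :=
  ∃ k : ℕ, ∀ a b : A, b ∈ powM φ k a

/-- A (acyclic) morphism is marked: it has a rightmost conjugate `φR` whose
last-letter map is injective, and a leftmost conjugate `φL` whose first-letter map
is injective. -/
def Marked {A : Type*} (φ : A → List A) : Prop :=
  ∃ (φR φL : A → List A) (x y : List A),
    (∀ a, φ a ++ x = x ++ φR a) ∧
    (∀ a, φL a ++ y = y ++ φ a) ∧
    (∃ a b : A, (φR a).getLast? ≠ (φR b).getLast?) ∧
    (∃ a b : A, (φL a).head? ≠ (φL b).head?) ∧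
    Function.Injective (fun c => (φR c).getLast?) ∧
    Function.Injective (fun c => (φL c).head?)


lemma mem_occs {A : Type*} [DecidableEq A] {w u : List A} {i : ℕ} :
    i ∈ occs w u ↔ i + w.length ≤ u.length ∧ (u.drop i).take w.length = w := by
  simp only [occs, Finset.mem_filter, Finset.mem_range]
  constructor
  · rintro ⟨_, h⟩; exact h
  · rintro ⟨h1, h2⟩; exact ⟨by omega, h1, h2⟩

lemma occs_self {A : Type*} [DecidableEq A] (w : List A) : occs w w = {0} := by
  ext i
  simp only [mem_occs, Finset.mem_singleton]
  constructor
  · rintro ⟨h1, _⟩; omega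
  · rintro rfl; simp

lemma occs_step {A : Type*} [DecidableEq A] {w t s : List A}
    (hpre : w <+: s) (h0 : occs w (t ++ w) = {0, t.length}) (_ht : t.length ≠ 0) :
    occs w (t ++ s) = insert 0 ((occs w s).image (· + t.length)) := by
  have hws : w.length ≤ s.length := hpre.length_le
  obtain ⟨s', rfl⟩ := hpre
  have h0mem : (0 : ℕ) ∈ occs w (t ++ w) := by rw [h0]; simp
  rw [mem_occs] at h0mem
  have hwtw : (t ++ w).take w.length = w := by simpa using h0mem.2
  ext i
  simp only [Finset.mem_insert, Finset.mem_image, mem_occs]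
  constructor
  · rintro ⟨hlen, heq⟩
    simp only [List.length_append] at hlen
    by_cases hi : t.length ≤ i
    · right
      refine ⟨i - t.length, ⟨by simp [List.length_append]; omega, ?_⟩, by omega⟩
      have : (t ++ (w ++ s')).drop i = (w ++ s').drop (i - t.length) := by
        rw [List.drop_append, List.drop_eq_nil_of_le (by omega)]
        simp
      rw [this] at heq
      exact heq
    · left
      push_neg at hi
      have hre : t ++ (w ++ s') = (t ++ w) ++ s' := by simp
      rw [hre] at heq
      have hd : ((t ++ w) ++ s').drop i = (t ++ w).drop i ++ s' := by
        rw [List.drop_append,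
          Nat.sub_eq_zero_of_le (by simp; omega), List.drop_zero]
      rw [hd, List.take_append_of_le_length (by simp; omega)] at heq
      have : i ∈ occs w (t ++ w) := mem_occs.2 ⟨by simp; omega, heq⟩
      rw [h0] at this
      simp at this
      omega
  · rintro (rfl | ⟨j, ⟨hj1, hj2⟩, rfl⟩)
    · constructor
      · simp; omega
      · rw [List.drop_zero]
        have hre : t ++ (w ++ s') = (t ++ w) ++ s' := by simp
        rw [hre, List.take_append_of_le_length (by simp), hwtw]
    · simp only [List.length_append] at hj1 ⊢
      refine ⟨by omega, ?_⟩
      have : (t ++ (w ++ s')).drop (j + t.length) = (w ++ s').drop j := by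
        rw [List.drop_append, List.drop_eq_nil_of_le (by omega)]
        simp
      rw [this]
      exact hj2

/-- For a `P_ret` morphism `φ` with marker `w` and every finite word `v`,
`w` is a prefix of `φ(v)w` and `w` occurs in `φ(v)w` exactly `|v| + 1` times. -/
theorem pret_marker_prefix_and_occurrences {A : Type*} [Fintype A] [DecidableEq A]
    (φ : A → List A) (w : List A) (h : IsPretWithMarker φ w) (v : List A) :
    w <+: applyM φ v ++ w ∧ (occs w (applyM φ v ++ w)).card = v.length + 1 := by
  obtain ⟨hinj, hpal, hlet⟩ := h
  induction v with
  | nil =>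
      simp [applyM, occs_self]
  | cons a v ih =>
      obtain ⟨ihp, ihc⟩ := ih
      have hstep := occs_step ihp (hlet a).2.1 (hlet a).2.2
      have happ : applyM φ (a :: v) ++ w = φ a ++ (applyM φ v ++ w) := by
        simp [applyM]
      have h0occ : (0 : ℕ) ∈ occs w (φ a ++ w) := by rw [(hlet a).2.1]; simp
      rw [mem_occs] at h0occ
      have hwpre : w <+: φ a ++ w := by
        have := h0occ.2
        rw [List.drop_zero] at this
        nth_rewrite 1 [← this]
        exact List.take_prefix _ _
      constructor
      · rw [happ]
        exact hwpre.trans ((List.prefix_append_right_inj (φ a)).2 ihp)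
      · rw [happ, hstep, Finset.card_insert_of_notMem, Finset.card_image_of_injective]
        · rw [ihc]; simp
        · exact fun x y hxy => by omega
        · simp only [Finset.mem_image, not_exists]
          rintro j ⟨hj, hj0⟩
          have := (hlet a).2.2
          omega
end

section
/- Let A be a finite alphabet, φ: A* → A* a morphism in Class P_ret with marker w, and u ∈ A^ℕ an infinite word. If v is a finite factor of φ(u) having w both as a prefix and as a suffix, then there exists a unique finite word x ∈ A* such that v = φ(x)w; moreover this word x is a factor of u. -/
open List

/-!
The marker `w` synchronises `φ`: since `w` occurs in `φ(a)w` only at the two ends, every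
occurrence of `w` in `φ(s)w` sits at a cut point `|φ(p)|` for some prefix `p` of `s`.
So if a factor `v` of `φ(u)` begins and ends with `w`, both `v` and its final `w` start at cut
points, whence `v = φ(x)w` with `x` a factor of `u`. The same synchronisation makes `φ`
injective on words, which gives uniqueness.
-/

section Morphism

variable {A : Type*} {φ : A → List A}

@[simp]
lemma applyM_nil (φ : A → List A) : applyM φ [] = [] := rfl

@[simp]
lemma applyM_cons (φ : A → List A) (a : A) (x : List A) :
    applyM φ (a :: x) = φ a ++ applyM φ x := by
  simp [applyM]

@[simp]
lemma applyM_append (φ : A → List A) (x y : List A) :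
    applyM φ (x ++ y) = applyM φ x ++ applyM φ y := by
  simp [applyM]

lemma length_le_length_applyM (hne : ∀ a, φ a ≠ []) (x : List A) :
    x.length ≤ (applyM φ x).length := by
  induction x with
  | nil => simp
  | cons a x ih =>
    have := List.length_pos_iff.mpr (hne a)
    simp only [applyM_cons, length_cons, length_append]
    omega

end Morphism

section Marker

variable {A : Type*} [DecidableEq A] {φ : A → List A} {w : List A}

lemma mem_occs_iff {z : List A} {q : ℕ} :
    q ∈ occs w z ↔ ∃ α : List A, α.length = q ∧ α ++ w <+: z := by
  simp only [occs, Finset.mem_filter, Finset.mem_range]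
  constructor
  · rintro ⟨-, hq, hw⟩
    refine ⟨z.take q, by rw [length_take]; omega, (z.drop q).drop w.length, ?_⟩
    conv_rhs => rw [← z.take_append_drop q, ← (z.drop q).take_append_drop w.length, hw]
    simp
  · rintro ⟨α, rfl, t, rfl⟩
    simp only [length_append, append_assoc, drop_left, take_left, and_true]
    omega

lemma append_prefix_iff_of_occs_eq {z α : List A} (hocc : occs w (z ++ w) = {0, z.length}) :
    α ++ w <+: z ++ w ↔ α = [] ∨ α = z := by
  constructor
  · intro hα
    have hq : α.length ∈ occs w (z ++ w) := mem_occs_iff.mpr ⟨α, rfl, hα⟩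
    rw [hocc, Finset.mem_insert, Finset.mem_singleton, length_eq_zero_iff] at hq
    refine hq.imp_right fun hlen => ?_
    exact (prefix_of_prefix_length_le ((prefix_append α w).trans hα)
      (prefix_append z w) hlen.le).eq_of_length hlen
  · rintro (rfl | rfl)
    · obtain ⟨β, hβ, hw⟩ := mem_occs_iff.mp (hocc ▸ Finset.mem_insert_self 0 _)
      rwa [length_eq_zero_iff.mp hβ] at hw
    · exact prefix_rfl

variable (hocc : ∀ a, occs w (φ a ++ w) = {0, (φ a).length})
include hocc

lemma prefix_applyM_append_marker (x : List A) : w <+: applyM φ x ++ w := by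
  induction x with
  | nil => simp
  | cons a x ih =>
    obtain ⟨t, ht⟩ := ih
    have hw : w <+: φ a ++ w := (append_prefix_iff_of_occs_eq (hocc a)).mpr (.inl rfl)
    rw [applyM_cons, append_assoc, ← ht, ← append_assoc]
    exact hw.trans (prefix_append _ _)

lemma exists_prefix_applyM_eq_of_append_prefix {s α : List A}
    (h : α ++ w <+: applyM φ s ++ w) : ∃ p, p <+: s ∧ applyM φ p = α := by
  induction s generalizing α with
  | nil =>
    have hlen := h.length_le
    simp only [applyM_nil, nil_append, length_append] at hlen
    exact ⟨[], nil_prefix, (length_eq_zero_iff.mp (by omega)).symm⟩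
  | cons a s ih =>
    have hsplit : applyM φ (a :: s) ++ w = φ a ++ (applyM φ s ++ w) := by simp
    rcases le_or_gt (φ a).length α.length with hle | hlt
    · obtain ⟨β, rfl⟩ : φ a <+: α := prefix_of_prefix_length_le
        (hsplit ▸ prefix_append _ _) ((prefix_append α w).trans h) hle
      rw [hsplit, append_assoc, prefix_append_right_inj] at h
      obtain ⟨p, hp, rfl⟩ := ih h
      exact ⟨a :: p, cons_prefix_cons.mpr ⟨rfl, hp⟩, by simp⟩
    · -- the occurrence of `w` starts inside `φ a`, so it is the one at the start of `φ a ++ w`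
      have hα : α ++ w <+: φ a ++ w := prefix_of_prefix_length_le h
        (hsplit ▸ (prefix_append_right_inj _).mpr (prefix_applyM_append_marker hocc s))
        (by simp only [length_append]; omega)
      rcases (append_prefix_iff_of_occs_eq (hocc a)).mp hα with rfl | rfl
      · exact ⟨[], nil_prefix, rfl⟩
      · exact absurd hlt (lt_irrefl _)

lemma prefix_of_append_applyM_eq (hne : ∀ a, φ a ≠ []) {a b : A} {x y : List A}
    (h : φ a ++ applyM φ x = φ b ++ applyM φ y) : φ b <+: φ a := by
  have hpre : φ a ++ w <+: applyM φ (b :: y) ++ w := by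
    rw [applyM_cons, ← h, append_assoc]
    exact (prefix_append_right_inj _).mpr (prefix_applyM_append_marker hocc x)
  obtain ⟨_ | ⟨c, p⟩, hp, hpa⟩ := exists_prefix_applyM_eq_of_append_prefix hocc hpre
  · exact absurd hpa.symm (hne a)
  · obtain rfl := (cons_prefix_cons.mp hp).1
    rw [← hpa, applyM_cons]
    exact prefix_append _ _

lemma applyM_injective (hinj : Function.Injective φ) (hne : ∀ a, φ a ≠ []) :
    Function.Injective (applyM φ) := by
  intro x
  induction x with
  | nil =>
    rintro (_ | ⟨b, y⟩) h
    · rfl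
    · exact absurd (append_eq_nil_iff.mp (by simpa using h.symm)).1 (hne b)
  | cons a x ih =>
    rintro (_ | ⟨b, y⟩) h
    · exact absurd (append_eq_nil_iff.mp (by simpa using h)).1 (hne a)
    · rw [applyM_cons, applyM_cons] at h
      have hba := prefix_of_append_applyM_eq hocc hne h
      have hab := prefix_of_append_applyM_eq hocc hne h.symm
      have hφ : φ a = φ b := hab.eq_of_length (le_antisymm hab.length_le hba.length_le)
      rw [hφ] at h
      rw [hinj hφ, ih (append_cancel_left h)]

lemma exists_infix_eq_applyM_append_of_infix {s v : List A} (hv : v <:+: applyM φ s)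
    (hpre : w <+: v) (hsuf : w <:+ v) : ∃ x, x <:+: s ∧ v = applyM φ x ++ w := by
  obtain ⟨α, β, hαβ⟩ := hv
  obtain ⟨p, ⟨s', rfl⟩, rfl⟩ := exists_prefix_applyM_eq_of_append_prefix hocc (s := s) (α := α)
    (by rw [← hαβ, append_assoc, append_assoc]
        exact (prefix_append_right_inj _).mpr (hpre.trans (prefix_append _ _)))
  have hs' : applyM φ s' = v ++ β := by
    rw [applyM_append, append_assoc] at hαβ
    exact (append_cancel_left hαβ).symm
  obtain ⟨v', rfl⟩ := hsuf
  obtain ⟨x, hx, rfl⟩ := exists_prefix_applyM_eq_of_append_prefix hocc (s := s') (α := v')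
    (by rw [hs', append_assoc]; exact prefix_append _ _)
  exact ⟨x, hx.isInfix.trans (suffix_append _ _).isInfix, rfl⟩

end Marker

section InfiniteWord

variable {A : Type*} {φ : A → List A}

@[simp]
lemma length_factorAt (u : ℕ → A) (i n : ℕ) : (factorAt u i n).length = n := by
  simp [factorAt]

@[simp]
lemma getElem_factorAt (u : ℕ → A) (i n k : ℕ) (hk : k < (factorAt u i n).length) :
    (factorAt u i n)[k] = u (i + k) := by
  simp [factorAt]

lemma factorAt_add (u : ℕ → A) (i m n : ℕ) :
    factorAt u i (m + n) = factorAt u i m ++ factorAt u (i + m) n := by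
  simp [factorAt, range_add, add_assoc]

lemma inLang_of_infix_factorAt {u : ℕ → A} {x : List A} {N : ℕ} (h : x <:+: factorAt u 0 N) :
    InLang u x := by
  obtain ⟨α, β, hαβ⟩ := h
  show ∃ i, factorAt u i x.length = x
  refine ⟨α.length, ?_⟩
  have hN : N = α.length + x.length + β.length := by
    simpa [add_assoc] using (congrArg length hαβ).symm
  rw [hN, factorAt_add, factorAt_add, zero_add] at hαβ
  exact (append_inj (append_inj hαβ.symm (by simp)).1 (by simp)).2

lemma applyM_factorAt_prefix (u : ℕ → A) {M N : ℕ} (h : M ≤ N) :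
    applyM φ (factorAt u 0 M) <+: applyM φ (factorAt u 0 N) := by
  obtain ⟨k, rfl⟩ := Nat.exists_eq_add_of_le h
  rw [factorAt_add, applyM_append]
  exact prefix_append _ _

lemma applyInf_eq_getD (u : ℕ → A) (k : ℕ) :
    applyInf φ u k = (applyM φ (factorAt u 0 (k + 1))).getD k (u 0) := by
  simp [applyInf, applyM, factorAt, flatMap_map]

lemma factorAt_applyInf_prefix (hne : ∀ a, φ a ≠ []) (u : ℕ → A) {n N : ℕ} (h : n ≤ N) :
    factorAt (applyInf φ u) 0 n <+: applyM φ (factorAt u 0 N) := by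
  have hlen := length_le_length_applyM hne (factorAt u 0 N)
  rw [length_factorAt] at hlen
  rw [prefix_iff_eq_take]
  refine ext_getElem (by rw [length_take, length_factorAt]; omega) fun k hk _ => ?_
  rw [length_factorAt] at hk
  have hk1 := length_le_length_applyM hne (factorAt u 0 (k + 1))
  rw [length_factorAt] at hk1
  simp only [getElem_factorAt, zero_add, getElem_take]
  rw [applyInf_eq_getD, getD_eq_getElem _ _ (by omega),
    (applyM_factorAt_prefix u (by omega : k + 1 ≤ N)).getElem]

lemma exists_infix_applyM_factorAt_of_inLang_applyInf (hne : ∀ a, φ a ≠ []) {u : ℕ → A}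
    {v : List A} (hv : InLang (applyInf φ u) v) : ∃ N, v <:+: applyM φ (factorAt u 0 N) := by
  obtain ⟨i, hi⟩ := hv
  refine ⟨i + v.length, ?_⟩
  have hpre := factorAt_applyInf_prefix hne u (le_refl (i + v.length))
  rw [factorAt_add, zero_add, hi] at hpre
  exact (suffix_append _ _).isInfix.trans hpre.isInfix

end InfiniteWord

theorem pret_desubstitution_general {A : Type*} [DecidableEq A]
    (φ : A → List A) (w : List A) (h : IsPretWithMarker φ w) (u : ℕ → A)
    (v : List A) (hv : InLang (applyInf φ u) v) (hpre : w <+: v) (hsuf : w <:+ v) :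
    (∃ x : List A, v = applyM φ x ++ w ∧ InLang u x) ∧
    (∀ x y : List A, v = applyM φ x ++ w → v = applyM φ y ++ w → x = y) := by
  obtain ⟨hinj, -, hmarker⟩ := h
  have hocc a := (hmarker a).2.1
  have hne a : φ a ≠ [] := fun h0 => (hmarker a).2.2 (by simp [h0])
  obtain ⟨N, hN⟩ := exists_infix_applyM_factorAt_of_inLang_applyInf hne hv
  obtain ⟨x, hx, rfl⟩ := exists_infix_eq_applyM_append_of_infix hocc hN hpre hsuf
  refine ⟨⟨x, rfl, inLang_of_infix_factorAt hx⟩, fun y z hy hz => ?_⟩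
  exact applyM_injective hocc hinj hne (append_cancel_right (hy.symm.trans hz))

/-- If `v` is a factor of `φ(u)` having the marker `w` both as a prefix
and as a suffix, then there is a unique `x` with `v = φ(x)w`; moreover `x` is a factor
of `u`. -/
theorem pret_desubstitution {A : Type*} [Fintype A] [DecidableEq A]
    (φ : A → List A) (w : List A) (h : IsPretWithMarker φ w) (u : ℕ → A)
    (v : List A) (hv : InLang (applyInf φ u) v) (hpre : w <+: v) (hsuf : w <:+ v) :
    (∃ x : List A, v = applyM φ x ++ w ∧ InLang u x) ∧
    (∀ x y : List A, v = applyM φ x ++ w → v = applyM φ y ++ w → x = y) :=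
  pret_desubstitution_general φ w h u v hv hpre hsuf
end

section
/- Let A be a finite alphabet and φ: A* → A* a morphism in Class P_ret with marker w, and assume that the last letters of the words φ(a), a ∈ A, are not all equal (i.e., φ equals its rightmost conjugate). Then there exists a morphism ξ: A* → A* such that φ(a)w = wξ(a) for every letter a ∈ A, the first letters of the words ξ(a), a ∈ A, are not all equal (so ξ is the leftmost conjugate of φ), and for every letter a the first letter of ξ(a) equals the last letter of φ(a). -/
open List

theorem List.append_eq_append_reverse_of_reverse_eq {A : Type*} {u w : List A}
    (hw : w.reverse = w) (huw : (u ++ w).reverse = u ++ w) : u ++ w = w ++ u.reverse := by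
  rw [← huw, List.reverse_append, hw]

theorem pret_rightmost_to_leftmost_general {A : Type*} [DecidableEq A]
    (φ : A → List A) (w : List A) (h : IsPretWithMarker φ w)
    (hR : ∃ a b : A, (φ a).getLast? ≠ (φ b).getLast?) :
    ∃ ξ : A → List A,
      (∀ a : A, φ a ++ w = w ++ ξ a) ∧
      (∃ a b : A, (ξ a).head? ≠ (ξ b).head?) ∧
      (∀ a : A, (ξ a).head? = (φ a).getLast?) := by
  obtain ⟨-, hw, hpal⟩ := h
  refine ⟨fun a => (φ a).reverse, fun a => ?_, ?_, fun a => List.head?_reverse⟩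
  · exact List.append_eq_append_reverse_of_reverse_eq hw (hpal a).1
  · obtain ⟨a, b, hab⟩ := hR
    exact ⟨a, b, by simpa only [List.head?_reverse] using hab⟩

/-- If `φ ∈ P_ret` with marker `w` equals its rightmost conjugate
(the last letters of the `φ(a)` are not all equal), then the marker conjugates `φ`
to its leftmost conjugate `ξ`: `φ(a)w = wξ(a)` for all `a`, the first letters of the
`ξ(a)` are not all equal, and the first letter of `ξ(a)` is the last letter of `φ(a)`. -/
theorem pret_rightmost_to_leftmost {A : Type*} [Fintype A] [DecidableEq A]
    (φ : A → List A) (w : List A) (h : IsPretWithMarker φ w)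
    (hR : ∃ a b : A, (φ a).getLast? ≠ (φ b).getLast?) :
    ∃ ξ : A → List A,
      (∀ a : A, φ a ++ w = w ++ ξ a) ∧
      (∃ a b : A, (ξ a).head? ≠ (ξ b).head?) ∧
      (∀ a : A, (ξ a).head? = (φ a).getLast?) :=
  pret_rightmost_to_leftmost_general φ w h hR
end
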